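/- arXiv:1904.12281 — 3 statements merged into one kernel-verified Lean document; each statement's English description precedes it below -/
import Mathlib

section
/- Let B, γ > 0, w ∈ ℕ with w ≥ 1, p ∈ (0,1), and let (ξ_j)_{j=1}^N be nonnegative reals with ∑_{j=1}^N ξ_j ≤ B. If for some index j < N we have ξ_j > 0 and the stationarity identity (1-p)/(1+γξ_{j+1}) = 1/(1+γξ_j) - p/(1 + (γ/w)(B - ∑_{i=1}^j ξ_i)) holds, and additionally ξ_j < (B - ∑_{i=1}^j ξ_i)/w, then ξ_{j+1} < ξ_j. -/
/-!
Write `a = 1 + γ ξ_j`, `x = 1 + γ ξ_{j+1}` and `d = 1 + (γ/w)(B - ∑_{i ≤ j} ξ_i)`.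
The bound on `ξ_j` says exactly `a < d`, so the stationarity identity gives
`(1-p)/x = 1/a - p/d > 1/a - p/a = (1-p)/a`, whence `x < a`.
-/

section

variable {K : Type*} [Field K] [LinearOrder K] [IsStrictOrderedRing K]

theorem lt_of_one_sub_div_eq_inv_sub_div {a d p x : K} (hp : 0 < p) (hp1 : p < 1)
    (ha : 0 < a) (had : a < d) (h : (1 - p) / x = 1 / a - p / d) : x < a := by
  have hq : 0 < 1 - p := sub_pos.mpr hp1
  have hcmp : (1 - p) / a < (1 - p) / x := by
    calc (1 - p) / a = 1 / a - p / a := by ring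
      _ < 1 / a - p / d := sub_lt_sub_left (div_lt_div_of_pos_left hp ha had) _
      _ = (1 - p) / x := h.symm
  have hx : 0 < x := by
    by_contra! hx
    exact (div_pos hq ha).not_ge (hcmp.le.trans (div_nonpos_of_nonneg_of_nonpos hq.le hx))
  exact (div_lt_div_iff_of_pos_left hq ha hx).mp hcmp

end

theorem step_decrease_general (B γ p : ℝ) (w : ℕ) (hγ : 0 < γ)
    (hp : 0 < p) (hp1 : p < 1) (ξ : ℕ → ℝ)
    (j : ℕ) (hpos : 0 < ξ j)
    (hrec : (1 - p) / (1 + γ * ξ (j + 1))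
        = 1 / (1 + γ * ξ j)
          - p / (1 + (γ / w) * (B - ∑ i ∈ Finset.Icc 1 j, ξ i)))
    (hlt : ξ j < (B - ∑ i ∈ Finset.Icc 1 j, ξ i) / w) :
    ξ (j + 1) < ξ j := by
  have ha : 0 < 1 + γ * ξ j := by positivity
  have had : 1 + γ * ξ j < 1 + (γ / w) * (B - ∑ i ∈ Finset.Icc 1 j, ξ i) := by
    rw [div_mul_comm, mul_comm _ γ]
    gcongr
  have hx := lt_of_one_sub_div_eq_inv_sub_div hp hp1 ha had hrec
  exact lt_of_mul_lt_mul_left (by linarith) hγ.le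

/-- If the KKT stationarity identity holds at index `j < N`, `ξ_j > 0`, and
`ξ_j < (B - ∑_{i=1}^j ξ_i)/w`, then `ξ_{j+1} < ξ_j`. -/
theorem step_decrease (B γ p : ℝ) (w : ℕ) (hB : 0 < B) (hγ : 0 < γ) (hw : 1 ≤ w)
    (hp : 0 < p) (hp1 : p < 1) (N : ℕ) (ξ : ℕ → ℝ)
    (hnonneg : ∀ j, 1 ≤ j → j ≤ N → 0 ≤ ξ j)
    (hsum : ∑ j ∈ Finset.Icc 1 N, ξ j ≤ B)
    (j : ℕ) (hj : 1 ≤ j) (hjN : j < N) (hpos : 0 < ξ j)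
    (hrec : (1 - p) / (1 + γ * ξ (j + 1))
        = 1 / (1 + γ * ξ j)
          - p / (1 + (γ / w) * (B - ∑ i ∈ Finset.Icc 1 j, ξ i)))
    (hlt : ξ j < (B - ∑ i ∈ Finset.Icc 1 j, ξ i) / w) :
    ξ (j + 1) < ξ j :=
  step_decrease_general B γ p w hγ hp hp1 ξ j hpos hrec hlt
end

section
/- Let B, γ > 0, w ≥ 1 an integer, p ∈ (0,1). Suppose (ξ_j^*)_{j≥1} is a sequence of reals in [0,B] satisfying for all j ≥ 1 the recursion (1-p)/(1+γξ^*_{j+1}) = 1/(1+γξ^*_j) - p/(1 + (γ/w)(B - ∑_{i=1}^j ξ^*_i)) and the strict inequality ξ^*_j < (B - ∑_{i=1}^j ξ^*_i)/w for all j. Then (ξ^*_j) is strictly decreasing: ξ^*_{j+1} < ξ^*_j for all j ≥ 1. -/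
/-! Write `a = 1 + γ ξ_j`, `c = 1 + γ ξ_{j+1}` and `d = 1 + (γ/w) R_j` for the residual `R_j`.
The residual-battery inequality says `a < d`, so the recursion gives
`(1-p)/c = 1/a - p/d > 1/a - p/a = (1-p)/a`, i.e. `c < a`. -/

lemma lt_of_eq_inv_sub_div {p a c d : ℝ} (hp : 0 < p) (hp1 : p < 1) (ha : 0 < a) (hc : 0 < c)
    (had : a < d) (h : (1 - p) / c = 1 / a - p / d) : c < a := by
  have hpd : p / d < p / a := div_lt_div_of_pos_left hp ha had
  have hlt : (1 - p) / a < (1 - p) / c := by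
    rw [h, sub_div]
    linarith
  exact (div_lt_div_iff_of_pos_left (by linarith) ha hc).mp hlt

theorem seq_strict_decreasing_general (B γ p : ℝ) (w : ℕ) (hγ : 0 < γ)
    (hp : 0 < p) (hp1 : p < 1) (ξ : ℕ → ℝ)
    (hmem : ∀ j, 1 ≤ j → ξ j ∈ Set.Icc (0 : ℝ) B)
    (hrec : ∀ j, 1 ≤ j →
      (1 - p) / (1 + γ * ξ (j + 1))
        = 1 / (1 + γ * ξ j)
          - p / (1 + (γ / w) * (B - ∑ i ∈ Finset.Icc 1 j, ξ i)))
    (hlt : ∀ j, 1 ≤ j → ξ j < (B - ∑ i ∈ Finset.Icc 1 j, ξ i) / w) :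
    ∀ j, 1 ≤ j → ξ (j + 1) < ξ j := by
  intro j hj
  have hξj : 0 ≤ ξ j := (hmem j hj).1
  have hξj1 : 0 ≤ ξ (j + 1) := (hmem (j + 1) (by omega)).1
  have hresidual : 1 + γ * ξ j < 1 + (γ / w) * (B - ∑ i ∈ Finset.Icc 1 j, ξ i) := by
    rw [div_mul_comm, mul_comm (_ / _)]
    linarith [mul_lt_mul_of_pos_left (hlt j hj) hγ]
  have hγξ := lt_of_eq_inv_sub_div hp hp1 (by positivity) (by positivity) hresidual (hrec j hj)
  exact lt_of_mul_lt_mul_left (by linarith) hγ.le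

/-- If a sequence `(ξ*_j)_{j≥1}` with values in `[0,B]` satisfies the stationarity
recursion and the strict residual-battery inequality for all `j ≥ 1`, then it is
strictly decreasing. -/
theorem seq_strict_decreasing (B γ p : ℝ) (w : ℕ) (hB : 0 < B) (hγ : 0 < γ) (hw : 1 ≤ w)
    (hp : 0 < p) (hp1 : p < 1) (ξ : ℕ → ℝ)
    (hmem : ∀ j, 1 ≤ j → ξ j ∈ Set.Icc (0 : ℝ) B)
    (hrec : ∀ j, 1 ≤ j →
      (1 - p) / (1 + γ * ξ (j + 1))
        = 1 / (1 + γ * ξ j)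
          - p / (1 + (γ / w) * (B - ∑ i ∈ Finset.Icc 1 j, ξ i)))
    (hlt : ∀ j, 1 ≤ j → ξ j < (B - ∑ i ∈ Finset.Icc 1 j, ξ i) / w) :
    ∀ j, 1 ≤ j → ξ (j + 1) < ξ j :=
  seq_strict_decreasing_general B γ p w hγ hp hp1 ξ hmem hrec hlt
end

section
/- Let B, γ > 0, w ≥ 1 integer, p ∈ (0,1). For any admissible sequences x, y (nonnegative with total sum ≤ B) with x ≠ y, and any t ∈ (0,1), T_∞(t·x + (1-t)·y) > t·T_∞(x) + (1-t)·T_∞(y) provided T_∞(x) and T_∞(y) are finite; i.e., T_∞ is strictly concave on the set of admissible sequences. -/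
open Real Set

/-- The long-term throughput functional `T_∞` of the look-ahead model (log base 2),
evaluated at a sequence `x` indexed from 1. -/
noncomputable def Tinf (B γ p : ℝ) (w : ℕ) (x : ℕ → ℝ) : ℝ :=
  (∑ k ∈ Finset.Icc 1 w, p ^ 2 * (1 - p) ^ (k - 1) * ((k : ℝ) / 2) *
      Real.logb 2 (1 + γ * B / k))
  + (∑' j : ℕ, p * (1 - p) ^ ((j + 1) + w - 1) * (1 / 2) *
      Real.logb 2 (1 + γ * x (j + 1)))
  + (∑' k : ℕ, p ^ 2 * (1 - p) ^ ((k + 1) + w - 1) * ((w : ℝ) / 2) *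
      Real.logb 2 (1 + (γ / w) * (B - ∑ i ∈ Finset.Icc 1 (k + 1), x i)))

/-!
Every summand of `T_∞` is a nonnegative weight times the strictly concave function
`u ↦ log₂ (1 + c u)`, evaluated at an affine function of the sequence: a coordinate `x_j`, or the
remaining budget `B - ∑_{i ≤ k} x_i`. So each summand is concave along the segment from `x` to `y`,
strictly so at a coordinate where `x` and `y` differ, and summing gives strict concavity. The
series along the segment converge because `log₂ (1 + c u)` is nonnegative and monotone, hence its
value at a convex combination is at most the sum of its values at the endpoints.
-/

section WeightedSeries

variable {s : Set ℝ} {φ : ℝ → ℝ} {c u v : ℕ → ℝ} {t : ℝ}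

lemma summable_mul_comp_combo (hs : Convex ℝ s) (hφ : MonotoneOn φ s)
    (hφ₀ : ∀ a ∈ s, 0 ≤ φ a) (hc : ∀ i, 0 ≤ c i) (hu : ∀ i, u i ∈ s) (hv : ∀ i, v i ∈ s)
    (hsu : Summable fun i => c i * φ (u i)) (hsv : Summable fun i => c i * φ (v i))
    (ht₀ : 0 ≤ t) (ht₁ : t ≤ 1) :
    Summable fun i => c i * φ (t * u i + (1 - t) * v i) := by
  have hz : ∀ i, t * u i + (1 - t) * v i ∈ s := fun i =>
    hs (hu i) (hv i) ht₀ (sub_nonneg.2 ht₁) (add_sub_cancel t 1)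
  refine (hsu.add hsv).of_nonneg_of_le (fun i => mul_nonneg (hc i) (hφ₀ _ (hz i))) (fun i => ?_)
  have hmax : t * u i + (1 - t) * v i ≤ max (u i) (v i) :=
    Convex.combo_le_max (u i) (v i) ht₀ (sub_nonneg.2 ht₁) (add_sub_cancel t 1)
  have hle : φ (t * u i + (1 - t) * v i) ≤ φ (u i) + φ (v i) := by
    rcases le_total (u i) (v i) with h | h
    · rw [max_eq_right h] at hmax
      linarith [hφ (hz i) (hv i) hmax, hφ₀ _ (hu i)]
    · rw [max_eq_left h] at hmax
      linarith [hφ (hz i) (hu i) hmax, hφ₀ _ (hv i)]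
  rw [← mul_add]
  exact mul_le_mul_of_nonneg_left hle (hc i)

lemma ConcaveOn.tsum_mul_combo_le (hφ : ConcaveOn ℝ s φ) (hc : ∀ i, 0 ≤ c i)
    (hu : ∀ i, u i ∈ s) (hv : ∀ i, v i ∈ s)
    (hsu : Summable fun i => c i * φ (u i)) (hsv : Summable fun i => c i * φ (v i))
    (hsz : Summable fun i => c i * φ (t * u i + (1 - t) * v i)) (ht₀ : 0 ≤ t) (ht₁ : t ≤ 1) :
    t * ∑' i, c i * φ (u i) + (1 - t) * ∑' i, c i * φ (v i)
      ≤ ∑' i, c i * φ (t * u i + (1 - t) * v i) := by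
  rw [← tsum_mul_left, ← tsum_mul_left, ← (hsu.mul_left t).tsum_add (hsv.mul_left (1 - t))]
  refine Summable.tsum_le_tsum (fun i => ?_) ((hsu.mul_left t).add (hsv.mul_left (1 - t))) hsz
  have h := hφ.2 (hu i) (hv i) ht₀ (sub_nonneg.2 ht₁) (add_sub_cancel t 1)
  simp only [smul_eq_mul] at h
  nlinarith [mul_le_mul_of_nonneg_left h (hc i)]

lemma StrictConcaveOn.tsum_mul_combo_lt (hφ : StrictConcaveOn ℝ s φ) (hc : ∀ i, 0 ≤ c i)
    (hu : ∀ i, u i ∈ s) (hv : ∀ i, v i ∈ s) {i₀ : ℕ} (hci₀ : 0 < c i₀) (huv : u i₀ ≠ v i₀)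
    (hsu : Summable fun i => c i * φ (u i)) (hsv : Summable fun i => c i * φ (v i))
    (hsz : Summable fun i => c i * φ (t * u i + (1 - t) * v i)) (ht₀ : 0 < t) (ht₁ : t < 1) :
    t * ∑' i, c i * φ (u i) + (1 - t) * ∑' i, c i * φ (v i)
      < ∑' i, c i * φ (t * u i + (1 - t) * v i) := by
  rw [← tsum_mul_left, ← tsum_mul_left, ← (hsu.mul_left t).tsum_add (hsv.mul_left (1 - t))]
  refine Summable.tsum_lt_tsum (i := i₀) (fun i => ?_) ?_
    ((hsu.mul_left t).add (hsv.mul_left (1 - t))) hsz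
  · have h := hφ.concaveOn.2 (hu i) (hv i) ht₀.le (sub_nonneg.2 ht₁.le) (add_sub_cancel t 1)
    simp only [smul_eq_mul] at h
    nlinarith [mul_le_mul_of_nonneg_left h (hc i)]
  · have h := hφ.2 (hu i₀) (hv i₀) huv ht₀ (sub_pos.2 ht₁) (add_sub_cancel t 1)
    simp only [smul_eq_mul] at h
    nlinarith [mul_lt_mul_of_pos_left h hci₀]

end WeightedSeries

section LogOneAddMul

variable {c : ℝ}

lemma strictConcaveOn_logb_one_add_mul (hc : 0 < c) :
    StrictConcaveOn ℝ (Ici 0) fun u => logb 2 (1 + c * u) := by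
  refine ⟨convex_Ici 0, fun a (ha : 0 ≤ a) b (hb : 0 ≤ b) hab α β hα hβ hαβ => ?_⟩
  have hne : 1 + c * a ≠ 1 + c * b := fun h => hab (mul_left_cancel₀ hc.ne' (by linarith))
  have h := strictConcaveOn_log_Ioi.2 (show 0 < 1 + c * a by positivity)
    (show 0 < 1 + c * b by positivity) hne hα hβ hαβ
  simp only [smul_eq_mul] at h ⊢
  have harg : α * (1 + c * a) + β * (1 + c * b) = 1 + c * (α * a + β * b) := by
    linear_combination hαβ
  rw [harg] at h
  simp only [logb]
  rw [← mul_div_assoc, ← mul_div_assoc, ← add_div]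
  exact div_lt_div_of_pos_right h (log_pos one_lt_two)

lemma monotoneOn_logb_one_add_mul (hc : 0 < c) :
    MonotoneOn (fun u => logb 2 (1 + c * u)) (Ici 0) :=
  fun a (ha : 0 ≤ a) _ _ hab =>
    logb_le_logb_of_le one_lt_two (by positivity) (by gcongr)

lemma logb_one_add_mul_nonneg (hc : 0 < c) {a : ℝ} (ha : a ∈ Ici 0) :
    0 ≤ logb 2 (1 + c * a) :=
  logb_nonneg one_lt_two (le_add_of_nonneg_right (mul_nonneg hc.le ha))

end LogOneAddMul

theorem Tinf_strictConcave_general (B γ p : ℝ) (w : ℕ) (hγ : 0 < γ) (hw : 1 ≤ w)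
    (hp : 0 < p) (hp1 : p < 1) (x y : ℕ → ℝ)
    (hx0 : ∀ j, 1 ≤ j → 0 ≤ x j) (hxB : ∀ N, ∑ j ∈ Finset.Icc 1 N, x j ≤ B)
    (hy0 : ∀ j, 1 ≤ j → 0 ≤ y j) (hyB : ∀ N, ∑ j ∈ Finset.Icc 1 N, y j ≤ B)
    (hxfin1 : Summable (fun j : ℕ => p * (1 - p) ^ ((j + 1) + w - 1) * (1 / 2) *
        Real.logb 2 (1 + γ * x (j + 1))))
    (hxfin2 : Summable (fun k : ℕ => p ^ 2 * (1 - p) ^ ((k + 1) + w - 1) * ((w : ℝ) / 2) *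
        Real.logb 2 (1 + (γ / w) * (B - ∑ i ∈ Finset.Icc 1 (k + 1), x i))))
    (hyfin1 : Summable (fun j : ℕ => p * (1 - p) ^ ((j + 1) + w - 1) * (1 / 2) *
        Real.logb 2 (1 + γ * y (j + 1))))
    (hyfin2 : Summable (fun k : ℕ => p ^ 2 * (1 - p) ^ ((k + 1) + w - 1) * ((w : ℝ) / 2) *
        Real.logb 2 (1 + (γ / w) * (B - ∑ i ∈ Finset.Icc 1 (k + 1), y i))))
    (hne : ∃ j, 1 ≤ j ∧ x j ≠ y j)
    (t : ℝ) (ht0 : 0 < t) (ht1 : t < 1) :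
    t * Tinf B γ p w x + (1 - t) * Tinf B γ p w y
      < Tinf B γ p w (fun j => t * x j + (1 - t) * y j) := by
  obtain ⟨j₀, hj₀, hxy⟩ := hne
  obtain ⟨i₀, rfl⟩ := Nat.exists_eq_add_of_le' hj₀
  have hγw : 0 < γ / w := div_pos hγ (by exact_mod_cast hw)
  have hx : ∀ j, x (j + 1) ∈ Ici 0 := fun j => hx0 _ j.succ_pos
  have hy : ∀ j, y (j + 1) ∈ Ici 0 := fun j => hy0 _ j.succ_pos
  have hxS : ∀ k, B - ∑ i ∈ Finset.Icc 1 (k + 1), x i ∈ Ici 0 := fun k => sub_nonneg.2 (hxB _)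
  have hyS : ∀ k, B - ∑ i ∈ Finset.Icc 1 (k + 1), y i ∈ Ici 0 := fun k => sub_nonneg.2 (hyB _)
  have hc₁ : ∀ j : ℕ, 0 ≤ p * (1 - p) ^ ((j + 1) + w - 1) * (1 / 2) := fun j => by positivity
  have hc₂ : ∀ k : ℕ, 0 ≤ p ^ 2 * (1 - p) ^ ((k + 1) + w - 1) * ((w : ℝ) / 2) :=
    fun k => by positivity
  have hbudget : ∀ k, B - ∑ i ∈ Finset.Icc 1 (k + 1), (t * x i + (1 - t) * y i)
      = t * (B - ∑ i ∈ Finset.Icc 1 (k + 1), x i)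
        + (1 - t) * (B - ∑ i ∈ Finset.Icc 1 (k + 1), y i) := fun k => by
    rw [Finset.sum_add_distrib, ← Finset.mul_sum, ← Finset.mul_sum]; ring
  have hz₁ := summable_mul_comp_combo (convex_Ici 0) (monotoneOn_logb_one_add_mul hγ)
      (fun _ => logb_one_add_mul_nonneg hγ) hc₁ hx hy hxfin1 hyfin1 ht0.le ht1.le
  have h₁ := (strictConcaveOn_logb_one_add_mul hγ).tsum_mul_combo_lt hc₁ hx hy
    (by positivity) hxy hxfin1 hyfin1 hz₁ ht0 ht1
  have hz₂ := summable_mul_comp_combo (convex_Ici 0) (monotoneOn_logb_one_add_mul hγw)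
      (fun _ => logb_one_add_mul_nonneg hγw) hc₂ hxS hyS hxfin2 hyfin2 ht0.le ht1.le
  have h₂ := (strictConcaveOn_logb_one_add_mul hγw).concaveOn.tsum_mul_combo_le hc₂ hxS hyS
    hxfin2 hyfin2 hz₂ ht0.le ht1.le
  simp only [Tinf, hbudget]
  linarith

/-- `T_∞` is strictly concave on the set of admissible sequences: for admissible `x ≠ y`
(with finite values of `T_∞`, i.e. the defining series summable) and `t ∈ (0,1)`,
`T_∞(t x + (1-t) y) > t T_∞(x) + (1-t) T_∞(y)`. -/
theorem Tinf_strictConcave (B γ p : ℝ) (w : ℕ) (hB : 0 < B) (hγ : 0 < γ) (hw : 1 ≤ w)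
    (hp : 0 < p) (hp1 : p < 1) (x y : ℕ → ℝ)
    (hx0 : ∀ j, 1 ≤ j → 0 ≤ x j) (hxB : ∀ N, ∑ j ∈ Finset.Icc 1 N, x j ≤ B)
    (hy0 : ∀ j, 1 ≤ j → 0 ≤ y j) (hyB : ∀ N, ∑ j ∈ Finset.Icc 1 N, y j ≤ B)
    (hxfin1 : Summable (fun j : ℕ => p * (1 - p) ^ ((j + 1) + w - 1) * (1 / 2) *
        Real.logb 2 (1 + γ * x (j + 1))))
    (hxfin2 : Summable (fun k : ℕ => p ^ 2 * (1 - p) ^ ((k + 1) + w - 1) * ((w : ℝ) / 2) *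
        Real.logb 2 (1 + (γ / w) * (B - ∑ i ∈ Finset.Icc 1 (k + 1), x i))))
    (hyfin1 : Summable (fun j : ℕ => p * (1 - p) ^ ((j + 1) + w - 1) * (1 / 2) *
        Real.logb 2 (1 + γ * y (j + 1))))
    (hyfin2 : Summable (fun k : ℕ => p ^ 2 * (1 - p) ^ ((k + 1) + w - 1) * ((w : ℝ) / 2) *
        Real.logb 2 (1 + (γ / w) * (B - ∑ i ∈ Finset.Icc 1 (k + 1), y i))))
    (hne : ∃ j, 1 ≤ j ∧ x j ≠ y j)
    (t : ℝ) (ht0 : 0 < t) (ht1 : t < 1) :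
    t * Tinf B γ p w x + (1 - t) * Tinf B γ p w y
      < Tinf B γ p w (fun j => t * x j + (1 - t) * y j) :=
  Tinf_strictConcave_general B γ p w hγ hw hp hp1 x y hx0 hxB hy0 hyB hxfin1 hxfin2 hyfin1 hyfin2
    hne t ht0 ht1
end
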